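/- Let k ≥ 1, let P be the path graph on k + 2 vertices, let e be any edge of P, and let G be any finite simple graph. Then the disjoint union G ∪ (P − e) contains a subtree with at least k internal vertices if and only if G contains a subtree with at least k internal vertices. -/

import Mathlib

/-!
A subtree with `m` vertices has `m - 1` edges and, if `m ≥ 2`, at least two leaves, so it has
at most `m - 2` internal vertices, i.e. fewer internal vertices than edges. Since `P - e` has only
`k` edges, none of its subtrees has `k` internal vertices. A tree is connected, so a copy of it in
`G ∪ (P - e)` lies entirely in `G` or entirely in `P - e`.
-/

open SimpleGraph

/-- `G` contains a subtree (a connected acyclic subgraph, i.e. a tree) with at least `k`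
internal vertices (vertices of degree at least 2 in the subtree). -/
def SimpleGraph.HasSubtreeWithInternal {V : Type u} (G : SimpleGraph V) (k : ℕ) : Prop :=
  ∃ H : G.Subgraph, H.coe.IsTree ∧
    k ≤ {v : V | v ∈ H.verts ∧ 2 ≤ (H.neighborSet v).ncard}.ncard

namespace SimpleGraph

variable {α β V W : Type*} {T : SimpleGraph α} {T' : SimpleGraph β}
  {G : SimpleGraph V} {G' : SimpleGraph W}

def internalVerts (T : SimpleGraph α) : Set α := {v | 2 ≤ (T.neighborSet v).ncard}

lemma Iso.preimage_internalVerts (e : T ≃g T') : e ⁻¹' T'.internalVerts = T.internalVerts := by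
  ext v
  simp only [internalVerts, Set.mem_preimage, Set.mem_ofPred_eq, ← e.image_neighborSet,
    Set.ncard_image_of_injective _ e.injective]

lemma Iso.ncard_internalVerts_eq (e : T ≃g T') :
    T.internalVerts.ncard = T'.internalVerts.ncard := by
  rw [← e.preimage_internalVerts, Set.ncard_preimage_of_injective_subset_range e.injective
    (by simp [e.surjective.range_eq])]

lemma Subgraph.ncard_internal_eq_ncard_coe_internalVerts (H : G.Subgraph) :
    {v | v ∈ H.verts ∧ 2 ≤ (H.neighborSet v).ncard}.ncard = H.coe.internalVerts.ncard := by
  have hdeg (v : H.verts) : (H.coe.neighborSet v).ncard = (H.neighborSet v).ncard := by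
    rw [← Nat.card_coe_set_eq, ← Nat.card_coe_set_eq, Nat.card_congr (H.coeNeighborSetEquiv v)]
  have himage : Subtype.val '' H.coe.internalVerts =
      {v | v ∈ H.verts ∧ 2 ≤ (H.neighborSet v).ncard} := by
    ext v
    simp [internalVerts, hdeg, and_comm]
  rw [← himage, Set.ncard_image_of_injective _ Subtype.val_injective]

lemma hasSubtreeWithInternal_iff_exists_isContained {V : Type u} {G : SimpleGraph V} {k : ℕ} :
    G.HasSubtreeWithInternal k ↔
      ∃ (α : Type u) (T : SimpleGraph α), T.IsTree ∧ k ≤ T.internalVerts.ncard ∧ T ⊑ G := by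
  constructor
  · rintro ⟨H, hH, hk⟩
    exact ⟨H.verts, H.coe, hH, H.ncard_internal_eq_ncard_coe_internalVerts ▸ hk,
      H.coe_isContained⟩
  · rintro ⟨α, T, hT, hk, ⟨f⟩⟩
    refine ⟨f.toSubgraph, f.isoToSubgraph.isTree_iff.mp hT, ?_⟩
    rwa [Subgraph.ncard_internal_eq_ncard_coe_internalVerts,
      ← f.isoToSubgraph.ncard_internalVerts_eq]

lemma Copy.isContained_left_of_sum (f : Copy T (G ⊕g G')) (hT : T.Preconnected) {v₀ : α}
    {a₀ : V} (h₀ : f v₀ = .inl a₀) : T ⊑ G := by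
  have hleft (v : α) : ∃ a, f v = .inl a := by
    rcases hv : f v with a | b
    · exact ⟨a, rfl⟩
    · exact absurd (h₀ ▸ hv ▸ (hT v₀ v).map f.toHom) (not_reachable_sum_inl_inr a₀ b)
  choose g hg using hleft
  refine ⟨⟨⟨g, fun {u v} huv => ?_⟩, fun u v huv => f.injective ?_⟩⟩
  · simpa [hg] using f.toHom.map_adj huv
  · simp only [Copy.coe_toHom, hg]
    exact congrArg _ huv

lemma Connected.isContained_sum_iff (hT : T.Connected) :
    T ⊑ G ⊕g G' ↔ T ⊑ G ∨ T ⊑ G' := by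
  refine ⟨fun ⟨f⟩ => ?_, ?_⟩
  · obtain ⟨v₀⟩ := hT.nonempty
    rcases h₀ : f v₀ with a₀ | b₀
    · exact .inl (f.isContained_left_of_sum hT.preconnected h₀)
    · exact .inr ((Iso.sumComm.toCopy.comp f).isContained_left_of_sum hT.preconnected
        (v₀ := v₀) (a₀ := b₀) (by simp [Copy.comp_apply, h₀, Iso.sumComm]))
  · rintro (h | h)
    · exact h.trans Embedding.sumInl.isContained
    · exact h.trans Embedding.sumInr.isContained

lemma IsTree.ncard_internalVerts_le_card_edgeSet_sub_one [Finite α] (hT : T.IsTree) :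
    T.internalVerts.ncard ≤ Nat.card T.edgeSet - 1 := by
  have hcard := (isTree_iff_connected_and_card.mp hT).2
  rcases subsingleton_or_nontrivial α with hα | hα
  · have hempty : T.internalVerts = ∅ := by simp [internalVerts]
    simp [hempty]
  · have := Fintype.ofFinite α
    classical
    obtain ⟨u, v, huv, hu, hv⟩ := hT.exists_ne_and_degree_eq_one
    have hdeg (w : α) : (T.neighborSet w).ncard = T.degree w := by
      rw [← card_neighborSet_eq_degree, ← Nat.card_eq_fintype_card, Nat.card_coe_set_eq]
    have hsub : T.internalVerts ⊆ {u, v}ᶜ := by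
      rintro w hw (rfl | rfl) <;> simp_all [internalVerts]
    calc T.internalVerts.ncard ≤ ({u, v}ᶜ : Set α).ncard := Set.ncard_le_ncard hsub
      _ = Nat.card α - 2 := by rw [Set.ncard_compl, Set.ncard_pair huv]
      _ = Nat.card T.edgeSet - 1 := by omega

lemma IsTree.ncard_internalVerts_le_card_edgeSet_sub_one_of_isContained [Finite V]
    (hT : T.IsTree) (h : T ⊑ G) :
    T.internalVerts.ncard ≤ Nat.card G.edgeSet - 1 := by
  obtain ⟨f⟩ := h
  have : Finite α := Finite.of_injective f f.injective
  have hedges : Nat.card T.edgeSet ≤ Nat.card G.edgeSet :=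
    Nat.card_le_card_of_injective f.mapEdgeSet f.mapEdgeSet.injective
  have := hT.ncard_internalVerts_le_card_edgeSet_sub_one
  omega

lemma card_edgeSet_pathGraph_le (n : ℕ) : Nat.card (pathGraph (n + 1)).edgeSet ≤ n := by
  have hsurj : Function.Surjective fun i : Fin n =>
      (⟨s(i.castSucc, i.succ), by simp [pathGraph_adj]⟩ : (pathGraph (n + 1)).edgeSet) := by
    rintro ⟨e, he⟩
    induction e using Sym2.ind with
    | _ u v =>
      rw [mem_edgeSet, pathGraph_adj] at he
      rcases he with h | h
      · exact ⟨⟨u, by omega⟩, by ext; simp [Fin.ext_iff, h]⟩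
      · exact ⟨⟨v, by omega⟩, by ext; simp [Fin.ext_iff, h, or_comm]⟩
  simpa using Nat.card_le_card_of_surjective _ hsurj

lemma card_edgeSet_deleteEdges_singleton {e : Sym2 V} (he : e ∈ G.edgeSet) :
    Nat.card (G.deleteEdges {e}).edgeSet = Nat.card G.edgeSet - 1 := by
  simp only [Nat.card_coe_set_eq, edgeSet_deleteEdges, Set.ncard_sdiff_singleton_of_mem he]

end SimpleGraph

theorem subtree_disjoint_union_pathGraph_deleteEdge_iff_general {V : Type}
    (k : ℕ) (hk : 1 ≤ k) (e : Sym2 (Fin (k + 2)))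
    (he : e ∈ (pathGraph (k + 2)).edgeSet) (G : SimpleGraph V) :
    (G ⊕g (pathGraph (k + 2)).deleteEdges {e}).HasSubtreeWithInternal k ↔
      G.HasSubtreeWithInternal k := by
  have hedges : Nat.card ((pathGraph (k + 2)).deleteEdges {e}).edgeSet ≤ k := by
    rw [card_edgeSet_deleteEdges_singleton he]
    have : Nat.card (pathGraph (k + 2)).edgeSet ≤ k + 1 := card_edgeSet_pathGraph_le (k + 1)
    omega
  simp only [hasSubtreeWithInternal_iff_exists_isContained]
  refine exists_congr fun α => exists_congr fun T => and_congr_right fun hT =>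
    and_congr_right fun hkT => ?_
  rw [hT.connected.isContained_sum_iff, or_iff_left_iff_imp]
  intro hP
  have := hT.ncard_internalVerts_le_card_edgeSet_sub_one_of_isContained hP
  omega

/-- For the path graph `P` on `k + 2` vertices (`k ≥ 1`) with any edge `e` removed, the
disjoint union `G ∪ (P - e)` contains a subtree with at least `k` internal vertices iff
`G` does. -/
theorem subtree_disjoint_union_pathGraph_deleteEdge_iff {V : Type} [Fintype V]
    (k : ℕ) (hk : 1 ≤ k) (e : Sym2 (Fin (k + 2)))
    (he : e ∈ (pathGraph (k + 2)).edgeSet) (G : SimpleGraph V) :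
    (G ⊕g (pathGraph (k + 2)).deleteEdges {e}).HasSubtreeWithInternal k ↔
      G.HasSubtreeWithInternal k :=
  subtree_disjoint_union_pathGraph_deleteEdge_iff_general k hk e he G
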